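/- Let n ≥ 1, let h : ℝ → ℝ be a smooth 2π-periodic function (viewed as a smooth real-valued function on the unit circle via θ ↦ h(θ) = h(e^{iθ})), and let V := {(θ₁,…,θ_n, q₁,…,q_n) ∈ ℝⁿ × ℝⁿ : q_s > 0 for all s}. For smooth f₁, f₂ : V → ℝ define {f₁,f₂}_h := Σ_{s=1}^n 2 h(θ_s) q_s (∂f₁/∂θ_s · ∂f₂/∂q_s − ∂f₁/∂q_s · ∂f₂/∂θ_s). Then: (1) for all smooth f₁, f₂, f₃ : V → ℝ the Jacobi identity holds: {f₁,{f₂,f₃}_h}_h + {f₂,{f₃,f₁}_h}_h + {f₃,{f₁,f₂}_h}_h = 0; and (2) if h(θ) ≠ 0 for all θ, then at every point of V the 2n×2n structure matrix of coordinate brackets is invertible. Moreover, for two such functions h₁, h₂ one has {·,·}_{h₁} + {·,·}_{h₂} = {·,·}_{h₁+h₂}, so any two of these brackets are compatible. -/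

import Mathlib

open Real

/-- Partial derivative in the `θ_s` direction. -/
noncomputable def pTheta {n : ℕ} (f : (Fin n → ℝ) × (Fin n → ℝ) → ℝ) (s : Fin n)
    (p : (Fin n → ℝ) × (Fin n → ℝ)) : ℝ :=
  fderiv ℝ f p (Pi.single s 1, 0)

/-- Partial derivative in the `q_s` direction. -/
noncomputable def pQ {n : ℕ} (f : (Fin n → ℝ) × (Fin n → ℝ) → ℝ) (s : Fin n)
    (p : (Fin n → ℝ) × (Fin n → ℝ)) : ℝ :=
  fderiv ℝ f p (0, Pi.single s 1)

/-- The `h`-bracket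
`{f₁,f₂}_h = Σ_s 2 h(θ_s) q_s (∂f₁/∂θ_s ∂f₂/∂q_s − ∂f₁/∂q_s ∂f₂/∂θ_s)`. -/
noncomputable def pbrh {n : ℕ} (h : ℝ → ℝ) (f g : (Fin n → ℝ) × (Fin n → ℝ) → ℝ)
    (p : (Fin n → ℝ) × (Fin n → ℝ)) : ℝ :=
  ∑ s, 2 * h (p.1 s) * p.2 s * (pTheta f s p * pQ g s p - pQ f s p * pTheta g s p)

/-- The phase space `V`: all canonical weights positive. -/
def V (n : ℕ) : Set ((Fin n → ℝ) × (Fin n → ℝ)) := {p | ∀ s, 0 < p.2 s}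

/-- The `2n × 2n` structure matrix of coordinate brackets of the `h`-bracket:
`{θ_s,θ_t}_h = {q_s,q_t}_h = 0` and `{θ_s,q_t}_h = 2h(θ_s) q_t δ_{st}`. -/
noncomputable def structMath {n : ℕ} (h : ℝ → ℝ) (p : (Fin n → ℝ) × (Fin n → ℝ)) :
    Matrix (Fin n ⊕ Fin n) (Fin n ⊕ Fin n) ℝ :=
  Matrix.of fun i j =>
    match i, j with
    | Sum.inl _, Sum.inl _ => 0
    | Sum.inl s, Sum.inr t => if s = t then 2 * h (p.1 s) * p.2 t else 0
    | Sum.inr s, Sum.inl t => if s = t then -(2 * h (p.1 t) * p.2 s) else 0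
    | Sum.inr _, Sum.inr _ => 0

/- ### Auxiliary material -/

lemma isOpen_V (n : ℕ) : IsOpen (V n) := by
  have : V n = ⋂ s : Fin n, {p : (Fin n → ℝ) × (Fin n → ℝ) | 0 < p.2 s} := by
    ext p; simp [V, Set.mem_iInter]
  rw [this]
  exact isOpen_iInter_of_finite fun s =>
    isOpen_lt continuous_const ((continuous_apply s).comp continuous_snd)

/-- The summand of the directional derivative of `pbrh h f g` at `p` in direction `v`. -/
noncomputable def Xt {n : ℕ} (h : ℝ → ℝ) (f g : (Fin n → ℝ) × (Fin n → ℝ) → ℝ)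
    (p : (Fin n → ℝ) × (Fin n → ℝ)) (t : Fin n) (v : (Fin n → ℝ) × (Fin n → ℝ)) : ℝ :=
  (2 * deriv h (p.1 t) * p.2 t * v.1 t + 2 * h (p.1 t) * v.2 t) *
      (pTheta f t p * pQ g t p - pQ f t p * pTheta g t p)
    + 2 * h (p.1 t) * p.2 t *
        (fderiv ℝ (fderiv ℝ f) p v (Pi.single t 1, 0) * pQ g t p
          + pTheta f t p * fderiv ℝ (fderiv ℝ g) p v (0, Pi.single t 1)
          - fderiv ℝ (fderiv ℝ f) p v (0, Pi.single t 1) * pTheta g t p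
          - pQ f t p * fderiv ℝ (fderiv ℝ g) p v (Pi.single t 1, 0))

lemma fderiv_pbrh {n : ℕ} (h : ℝ → ℝ) (hsm : ContDiff ℝ (⊤ : ℕ∞) h)
    {f g : (Fin n → ℝ) × (Fin n → ℝ) → ℝ}
    (hf : ContDiffOn ℝ (⊤ : ℕ∞) f (V n)) (hg : ContDiffOn ℝ (⊤ : ℕ∞) g (V n))
    {p : (Fin n → ℝ) × (Fin n → ℝ)} (hp : p ∈ V n)
    (v : (Fin n → ℝ) × (Fin n → ℝ)) :
    fderiv ℝ (pbrh h f g) p v = ∑ t, Xt h f g p t v := by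
  classical
  have hV := isOpen_V n
  have hmem : V n ∈ nhds p := hV.mem_nhds hp
  -- second derivative facts
  have hApp : ∀ (k : (Fin n → ℝ) × (Fin n → ℝ) → ℝ), ContDiffOn ℝ (⊤ : ℕ∞) k (V n) →
      ∀ w : (Fin n → ℝ) × (Fin n → ℝ),
      HasFDerivAt (fun q => fderiv ℝ k q w) ((fderiv ℝ (fderiv ℝ k) p).flip w) p := by
    intro k hk w
    have h2 : HasFDerivAt (fderiv ℝ k) (fderiv ℝ (fderiv ℝ k) p) p :=
      (((hk.contDiffAt hmem).fderiv_right (m := 1) (WithTop.coe_le_coe.mpr le_top)).differentiableAt one_ne_zero).hasFDerivAt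
    simpa using h2.clm_apply (hasFDerivAt_const w p)
  -- projections
  have hπ1 : ∀ t : Fin n, HasFDerivAt (fun q : (Fin n → ℝ) × (Fin n → ℝ) => q.1 t)
      ((ContinuousLinearMap.proj t).comp
        (ContinuousLinearMap.fst ℝ (Fin n → ℝ) (Fin n → ℝ))) p :=
    fun t => ((ContinuousLinearMap.proj t).comp
      (ContinuousLinearMap.fst ℝ (Fin n → ℝ) (Fin n → ℝ))).hasFDerivAt
  have hπ2 : ∀ t : Fin n, HasFDerivAt (fun q : (Fin n → ℝ) × (Fin n → ℝ) => q.2 t)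
      ((ContinuousLinearMap.proj t).comp
        (ContinuousLinearMap.snd ℝ (Fin n → ℝ) (Fin n → ℝ))) p :=
    fun t => ((ContinuousLinearMap.proj t).comp
      (ContinuousLinearMap.snd ℝ (Fin n → ℝ) (Fin n → ℝ))).hasFDerivAt
  have hc1 : ∀ t : Fin n, HasFDerivAt (fun q : (Fin n → ℝ) × (Fin n → ℝ) => h (q.1 t))
      (deriv h (p.1 t) • ((ContinuousLinearMap.proj t).comp
        (ContinuousLinearMap.fst ℝ (Fin n → ℝ) (Fin n → ℝ)))) p :=
    fun t => ((hsm.differentiable (by simp) (p.1 t)).hasDerivAt).comp_hasFDerivAt p (hπ1 t)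
  have hD := fun t : Fin n =>
    (((hc1 t).const_mul 2).mul (hπ2 t)).mul
      (((hApp f hf (Pi.single t 1, 0)).mul (hApp g hg (0, Pi.single t 1))).sub
        ((hApp f hf (0, Pi.single t 1)).mul (hApp g hg (Pi.single t 1, 0))))
  have hsum := HasFDerivAt.sum (fun t (_ : t ∈ Finset.univ) => hD t)
  have hsum' := hsum.congr_of_eventuallyEq (f₁ := pbrh h f g)
    (Filter.Eventually.of_forall fun q => by
      simp only [pbrh, pTheta, pQ, Finset.sum_apply, Pi.mul_apply, Pi.sub_apply])
  have heq : fderiv ℝ (pbrh h f g) p = _ := hsum'.fderiv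
  rw [heq, ContinuousLinearMap.sum_apply]
  refine Finset.sum_congr rfl fun t _ => ?_
  unfold Xt pTheta pQ
  simp only [ContinuousLinearMap.add_apply, ContinuousLinearMap.sub_apply,
    ContinuousLinearMap.smul_apply, smul_eq_mul, ContinuousLinearMap.coe_comp',
    Function.comp_apply, ContinuousLinearMap.proj_apply, ContinuousLinearMap.coe_fst',
    ContinuousLinearMap.coe_snd', ContinuousLinearMap.flip_apply, Pi.mul_apply, Pi.sub_apply]
  ring


lemma snd_symm {n : ℕ} {f : (Fin n → ℝ) × (Fin n → ℝ) → ℝ}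
    (hf : ContDiffOn ℝ (⊤ : ℕ∞) f (V n)) {p : (Fin n → ℝ) × (Fin n → ℝ)} (hp : p ∈ V n)
    (v w : (Fin n → ℝ) × (Fin n → ℝ)) :
    fderiv ℝ (fderiv ℝ f) p v w = fderiv ℝ (fderiv ℝ f) p w v := by
  have hV := isOpen_V n
  have hmem : V n ∈ nhds p := hV.mem_nhds hp
  have hfd : ∀ᶠ q in nhds p, HasFDerivAt f (fderiv ℝ f q) q :=
    Filter.eventually_of_mem hmem fun q hq =>
      ((hf.contDiffAt (hV.mem_nhds hq)).differentiableAt (by simp)).hasFDerivAt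
  have h2 : HasFDerivAt (fderiv ℝ f) (fderiv ℝ (fderiv ℝ f) p) p :=
    (((hf.contDiffAt hmem).fderiv_right (m := 1) (WithTop.coe_le_coe.mpr le_top)).differentiableAt one_ne_zero).hasFDerivAt
  exact second_derivative_symmetric_of_eventually hfd h2 v w

lemma pbrh_pbrh {n : ℕ} (h : ℝ → ℝ) (hsm : ContDiff ℝ (⊤ : ℕ∞) h)
    {f g k : (Fin n → ℝ) × (Fin n → ℝ) → ℝ}
    (hf : ContDiffOn ℝ (⊤ : ℕ∞) f (V n)) (hg : ContDiffOn ℝ (⊤ : ℕ∞) g (V n))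
    (hk : ContDiffOn ℝ (⊤ : ℕ∞) k (V n))
    {p : (Fin n → ℝ) × (Fin n → ℝ)} (hp : p ∈ V n) :
    pbrh h f (pbrh h g k) p = ∑ s, ∑ t, 2 * h (p.1 s) * p.2 s *
      (pTheta f s p * Xt h g k p t (0, Pi.single s 1)
        - pQ f s p * Xt h g k p t (Pi.single s 1, 0)) := by
  show ∑ s, 2 * h (p.1 s) * p.2 s *
      (pTheta f s p * pQ (pbrh h g k) s p - pQ f s p * pTheta (pbrh h g k) s p) = _
  refine Finset.sum_congr rfl fun s _ => ?_
  have h1 : pTheta (pbrh h g k) s p = ∑ t, Xt h g k p t (Pi.single s 1, 0) :=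
    fderiv_pbrh h hsm hg hk hp _
  have h2 : pQ (pbrh h g k) s p = ∑ t, Xt h g k p t (0, Pi.single s 1) :=
    fderiv_pbrh h hsm hg hk hp _
  rw [h1, h2, Finset.mul_sum, Finset.mul_sum, ← Finset.sum_sub_distrib, Finset.mul_sum]

lemma sum_antisymm {n : ℕ} (F : Fin n → Fin n → ℝ) (hF : ∀ s t, F s t + F t s = 0) :
    ∑ s, ∑ t, F s t = 0 := by
  have h1 : (∑ s, ∑ t, F s t) + (∑ s, ∑ t, F t s) = 0 := by
    simp only [← Finset.sum_add_distrib]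
    exact Finset.sum_eq_zero fun s _ => Finset.sum_eq_zero fun t _ => hF s t
  have h2 : (∑ s, ∑ t, F t s) = ∑ s, ∑ t, F s t := Finset.sum_comm
  linarith

/-- For a smooth `2π`-periodic `h : ℝ → ℝ`, the `h`-bracket satisfies
the Jacobi identity on `V`; if `h` never vanishes its structure matrix is invertible at
every point of `V`; and `{·,·}_{h₁} + {·,·}_{h₂} = {·,·}_{h₁+h₂}`, so any two such
brackets are compatible. -/
theorem statement11 (n : ℕ) (hn : 1 ≤ n) (h h' : ℝ → ℝ)
    (hsm : ContDiff ℝ (⊤ : ℕ∞) h) (hper : ∀ x, h (x + 2 * Real.pi) = h x)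
    (hsm' : ContDiff ℝ (⊤ : ℕ∞) h') (hper' : ∀ x, h' (x + 2 * Real.pi) = h' x) :
    (∀ f₁ f₂ f₃ : (Fin n → ℝ) × (Fin n → ℝ) → ℝ,
      ContDiffOn ℝ (⊤ : ℕ∞) f₁ (V n) → ContDiffOn ℝ (⊤ : ℕ∞) f₂ (V n) → ContDiffOn ℝ (⊤ : ℕ∞) f₃ (V n) →
      ∀ p ∈ V n,
        pbrh h f₁ (pbrh h f₂ f₃) p + pbrh h f₂ (pbrh h f₃ f₁) p +
          pbrh h f₃ (pbrh h f₁ f₂) p = 0) ∧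
    ((∀ x, h x ≠ 0) → ∀ p ∈ V n, IsUnit (structMath h p)) ∧
    (∀ (f g : (Fin n → ℝ) × (Fin n → ℝ) → ℝ) (p : (Fin n → ℝ) × (Fin n → ℝ)),
      pbrh h f g p + pbrh h' f g p = pbrh (fun x => h x + h' x) f g p) := by
  refine ⟨?_, ?_, ?_⟩
  · -- Jacobi identity
    intro f₁ f₂ f₃ hf₁ hf₂ hf₃ p hp
    have hs₁ := snd_symm hf₁ hp
    have hs₂ := snd_symm hf₂ hp
    have hs₃ := snd_symm hf₃ hp
    rw [pbrh_pbrh h hsm hf₁ hf₂ hf₃ hp, pbrh_pbrh h hsm hf₂ hf₃ hf₁ hp,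
      pbrh_pbrh h hsm hf₃ hf₁ hf₂ hp]
    simp only [← Finset.sum_add_distrib]
    refine sum_antisymm _ fun s t => ?_
    unfold Xt
    simp only [Pi.single_apply, Pi.zero_apply, mul_zero, zero_mul, add_zero, zero_add, mul_one]
    rcases eq_or_ne s t with rfl | hst
    · simp only [if_pos rfl,
        hs₁ ((0 : Fin n → ℝ), Pi.single s 1) ((Pi.single s 1 : Fin n → ℝ), 0),
        hs₂ ((0 : Fin n → ℝ), Pi.single s 1) ((Pi.single s 1 : Fin n → ℝ), 0),
        hs₃ ((0 : Fin n → ℝ), Pi.single s 1) ((Pi.single s 1 : Fin n → ℝ), 0)]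
      ring
    · simp only [if_neg hst, if_neg hst.symm, mul_zero, zero_mul, add_zero, zero_add,
        hs₁ ((Pi.single t 1 : Fin n → ℝ), 0) ((Pi.single s 1 : Fin n → ℝ), 0),
        hs₁ ((Pi.single t 1 : Fin n → ℝ), 0) ((0 : Fin n → ℝ), Pi.single s 1),
        hs₁ ((0 : Fin n → ℝ), Pi.single t 1) ((Pi.single s 1 : Fin n → ℝ), 0),
        hs₁ ((0 : Fin n → ℝ), Pi.single t 1) ((0 : Fin n → ℝ), Pi.single s 1),
        hs₂ ((Pi.single t 1 : Fin n → ℝ), 0) ((Pi.single s 1 : Fin n → ℝ), 0),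
        hs₂ ((Pi.single t 1 : Fin n → ℝ), 0) ((0 : Fin n → ℝ), Pi.single s 1),
        hs₂ ((0 : Fin n → ℝ), Pi.single t 1) ((Pi.single s 1 : Fin n → ℝ), 0),
        hs₂ ((0 : Fin n → ℝ), Pi.single t 1) ((0 : Fin n → ℝ), Pi.single s 1),
        hs₃ ((Pi.single t 1 : Fin n → ℝ), 0) ((Pi.single s 1 : Fin n → ℝ), 0),
        hs₃ ((Pi.single t 1 : Fin n → ℝ), 0) ((0 : Fin n → ℝ), Pi.single s 1),
        hs₃ ((0 : Fin n → ℝ), Pi.single t 1) ((Pi.single s 1 : Fin n → ℝ), 0),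
        hs₃ ((0 : Fin n → ℝ), Pi.single t 1) ((0 : Fin n → ℝ), Pi.single s 1)]
      ring
  · -- invertibility of the structure matrix
    intro hne p hp
    set N : Matrix (Fin n ⊕ Fin n) (Fin n ⊕ Fin n) ℝ :=
      Matrix.of fun i j =>
        match i, j with
        | Sum.inl s, Sum.inr t => if s = t then -(2 * h (p.1 t) * p.2 s)⁻¹ else 0
        | Sum.inr s, Sum.inl t => if s = t then (2 * h (p.1 s) * p.2 t)⁻¹ else 0
        | _, _ => 0 with hN
    have hMN : structMath h p * N = 1 := by
      ext i j
      rcases i with s | s <;> rcases j with t | t <;>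
        simp only [Matrix.mul_apply, Fintype.sum_sum_type, structMath, hN, Matrix.of_apply,
          Matrix.one_apply, ite_mul, mul_ite, mul_zero, zero_mul, neg_mul, mul_neg, neg_neg,
          Finset.sum_ite_eq, Finset.sum_ite_eq', Finset.mem_univ, if_true, zero_add, add_zero,
          Finset.sum_const_zero, Sum.inl.injEq, Sum.inr.injEq, reduceCtorEq, if_false]
      · split
        · next heq =>
            subst heq
            have h1 : (2 : ℝ) * h (p.1 s) * p.2 s ≠ 0 := by
              have := hne (p.1 s); have := (hp s).ne'; positivity
            field_simp
            exact div_self (by have := hne (p.1 s); have := (hp s).ne'; positivity)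
        · norm_num
      · norm_num
      · split
        · next heq =>
            subst heq
            have h1 : (2 : ℝ) * h (p.1 s) * p.2 s ≠ 0 := by
              have := hne (p.1 s); have := (hp s).ne'; positivity
            field_simp
            exact div_self (by have := hne (p.1 s); have := (hp s).ne'; positivity)
        · norm_num
    have := invertibleOfRightInverse _ _ hMN
    exact isUnit_of_invertible _
  · -- additivity in h
    intro f g p
    unfold pbrh
    rw [← Finset.sum_add_distrib]
    exact Finset.sum_congr rfl fun s _ => by ring
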